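/- There exists a constant C > 0 such that for every real c ≥ 1 and all p ∈ ℝ³ the normalized relativistic Maxwellian satisfies (1 − 4/c²)·(2π)^{−3/2}·exp(−|p|²/2) ≤ μ^c(p) ≤ C·exp(−(3|p|/8)·min{|p|, 4c/3}). -/

import Mathlib

open Real MeasureTheory
open scoped BigOperators

noncomputable section

/-- Momentum space `ℝ³`. -/
abbrev E3 := EuclideanSpace ℝ (Fin 3)

/-- Relativistic energy `p⁰ = √(c² + |p|²)`. -/
def pZ (c : ℝ) (p : E3) : ℝ := Real.sqrt (c ^ 2 + ‖p‖ ^ 2)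

/-- Modified Bessel function
`K_j(γ) = (2^j j!/(2j)!)·γ^{−j}·∫_γ^∞ e^{−λ}(λ² − γ²)^{j−1/2} dλ`. -/
def Kb (j : ℕ) (γ : ℝ) : ℝ :=
  ((2 : ℝ) ^ j * Nat.factorial j / Nat.factorial (2 * j)) * γ ^ (-(j : ℝ)) *
    ∫ l in Set.Ioi γ, Real.exp (-l) * (l ^ 2 - γ ^ 2) ^ ((j : ℝ) - 1 / 2)

/-- Normalized relativistic Maxwellian `μ^c(p) = exp(−c p⁰)/(4π c K₂(c²))`. -/
def muC (c : ℝ) (p : E3) : ℝ :=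
  Real.exp (-(c * pZ c p)) / (4 * Real.pi * c * Kb 2 (c ^ 2))

/- ### Auxiliary lemmas -/

lemma sqEq' {a b : ℝ} (ha : 0 ≤ a) (hb : 0 ≤ b) (h : a ^ 2 = b ^ 2) : a = b := by
  nlinarith

lemma rpow_sqrt' (x : ℝ) (hx : 0 ≤ x) (n : ℕ) :
    x ^ ((n : ℝ) + 1 / 2) = x ^ n * Real.sqrt x := by
  rcases hx.eq_or_lt with h | h
  · subst h
    rw [Real.zero_rpow (by positivity), Real.sqrt_zero, mul_zero]
  · rw [Real.rpow_add h, Real.rpow_natCast, Real.sqrt_eq_rpow]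

lemma shiftIoi (γ : ℝ) (f : ℝ → ℝ) :
    ∫ l in Set.Ioi γ, f l = ∫ t in Set.Ioi (0:ℝ), f (t + γ) := by
  have h1 : MeasurePreserving (fun t : ℝ => t + γ) volume volume :=
    measurePreserving_add_right volume γ
  have h2 : MeasurableEmbedding (fun t : ℝ => t + γ) :=
    (MeasurableEquiv.addRight γ).measurableEmbedding
  rw [← h1.setIntegral_preimage_emb h2 f (Set.Ioi γ)]
  congr 1
  ext x; simp [← sub_lt_iff_lt_add]

lemma preIoi (γ : ℝ) : (fun t : ℝ => t + γ) ⁻¹' Set.Ioi γ = Set.Ioi 0 := by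
  ext x; simp [← sub_lt_iff_lt_add]

lemma intShift (γ u : ℝ) (hu : 0 < u) :
    IntegrableOn (fun l => Real.exp (-l) * (l - γ) ^ (u : ℝ)) (Set.Ioi γ) := by
  have h1 : MeasurePreserving (fun t : ℝ => t + γ) volume volume :=
    measurePreserving_add_right volume γ
  have h2 : MeasurableEmbedding (fun t : ℝ => t + γ) :=
    (MeasurableEquiv.addRight γ).measurableEmbedding
  have key : IntegrableOn
      ((fun l => Real.exp (-l) * (l - γ) ^ (u:ℝ)) ∘ (fun t : ℝ => t + γ)) (Set.Ioi 0) := by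
    have : ((fun l => Real.exp (-l) * (l - γ) ^ (u:ℝ)) ∘ (fun t : ℝ => t + γ))
        = fun t => Real.exp (-γ) * (Real.exp (-t) * t ^ ((u+1) - 1)) := by
      funext t
      simp only [Function.comp, add_sub_cancel_right, add_sub_cancel_left]
      rw [neg_add, Real.exp_add]
      norm_num
      ring
    rw [this]
    exact (Real.GammaIntegral_convergent (by linarith)).const_mul _
  have := (h1.integrableOn_comp_preimage h2
    (f := fun l => Real.exp (-l) * (l - γ) ^ (u:ℝ)) (s := Set.Ioi γ))
  rw [preIoi] at this
  exact this.mp key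

lemma intShiftVal (γ u : ℝ) (hu : 0 < u) :
    ∫ l in Set.Ioi γ, Real.exp (-l) * (l - γ) ^ (u : ℝ)
      = Real.exp (-γ) * Real.Gamma (u + 1) := by
  rw [shiftIoi]
  have : ∀ t : ℝ, Real.exp (-(t+γ)) * ((t+γ) - γ) ^ (u:ℝ)
      = Real.exp (-γ) * (Real.exp (-t) * t ^ ((u+1) - 1)) := by
    intro t
    rw [neg_add, Real.exp_add]
    norm_num
    ring
  simp_rw [this]
  rw [integral_const_mul, ← Real.Gamma_eq_integral (by linarith)]

lemma gamma52 : Real.Gamma (5/2) = 3/4 * Real.sqrt π := by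
  rw [show (5/2:ℝ) = (1/2 + 1) + 1 by norm_num, Real.Gamma_add_one (by norm_num),
    Real.Gamma_add_one (by norm_num), Real.Gamma_one_half_eq]
  ring

lemma gamma72 : Real.Gamma (7/2) = 15/8 * Real.sqrt π := by
  rw [show (7/2:ℝ) = 5/2 + 1 by norm_num, Real.Gamma_add_one (by norm_num), gamma52]
  ring

lemma gamma92 : Real.Gamma (9/2) = 105/16 * Real.sqrt π := by
  rw [show (9/2:ℝ) = 7/2 + 1 by norm_num, Real.Gamma_add_one (by norm_num), gamma72]
  ring

lemma ptLower (γ l : ℝ) (hγ : 1 ≤ γ) (hl : γ < l) :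
    Real.sqrt (8*γ^3) * (Real.exp (-l) * (l-γ) ^ (((1:ℕ):ℝ) + 1/2))
      ≤ Real.exp (-l) * (l^2-γ^2) ^ (((1:ℕ):ℝ) + 1/2) := by
  have ht : (0:ℝ) ≤ l - γ := by linarith
  have hlg : (0:ℝ) ≤ l + γ := by linarith
  have h2 : (0:ℝ) ≤ l^2 - γ^2 := by nlinarith
  rw [rpow_sqrt' _ ht, rpow_sqrt' _ h2]
  have key : Real.sqrt (8*γ^3) * ((l-γ)^(1:ℕ) * Real.sqrt (l-γ))
      ≤ (l^2-γ^2)^(1:ℕ) * Real.sqrt (l^2-γ^2) := by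
    have e1 : Real.sqrt (8*γ^3 * ((l-γ)^2 * (l-γ)))
        = Real.sqrt (8*γ^3) * ((l-γ)^(1:ℕ) * Real.sqrt (l-γ)) := by
      rw [Real.sqrt_mul (by positivity : (0:ℝ) ≤ 8*γ^3),
        Real.sqrt_mul (sq_nonneg _), Real.sqrt_sq ht]
      ring
    have e2 : Real.sqrt ((l^2-γ^2)^2 * (l^2-γ^2))
        = (l^2-γ^2)^(1:ℕ) * Real.sqrt (l^2-γ^2) := by
      rw [Real.sqrt_mul (sq_nonneg _), Real.sqrt_sq h2]
      ring
    rw [← e1, ← e2]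
    apply Real.sqrt_le_sqrt
    have h8 : 8*γ^3 ≤ (l+γ)^2*(l+γ) := by nlinarith
    have ht3 : (0:ℝ) ≤ (l-γ)^2*(l-γ) := by positivity
    calc 8*γ^3 * ((l-γ)^2*(l-γ)) ≤ ((l+γ)^2*(l+γ)) * ((l-γ)^2*(l-γ)) :=
          mul_le_mul_of_nonneg_right h8 ht3
      _ = (l^2-γ^2)^2 * (l^2-γ^2) := by ring
  calc Real.sqrt (8*γ^3) * (Real.exp (-l) * ((l-γ)^(1:ℕ) * Real.sqrt (l-γ)))
      = Real.exp (-l) * (Real.sqrt (8*γ^3) * ((l-γ)^(1:ℕ) * Real.sqrt (l-γ))) := by ring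
    _ ≤ Real.exp (-l) * ((l^2-γ^2)^(1:ℕ) * Real.sqrt (l^2-γ^2)) :=
        mul_le_mul_of_nonneg_left key (Real.exp_nonneg _)

lemma ptUpper (γ l : ℝ) (hγ : 1 ≤ γ) (hl : γ < l) :
    Real.exp (-l) * (l^2-γ^2) ^ (((1:ℕ):ℝ)+1/2)
      ≤ Real.sqrt (8*γ^3) * (Real.exp (-l) * (l-γ)^(((1:ℕ):ℝ)+1/2))
        + (3/(4*γ)) * Real.sqrt (8*γ^3) * (Real.exp (-l) * (l-γ)^(((2:ℕ):ℝ)+1/2))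
        + (3/(32*γ^2)) * Real.sqrt (8*γ^3) * (Real.exp (-l) * (l-γ)^(((3:ℕ):ℝ)+1/2)) := by
  have hγ0 : (0:ℝ) < γ := by linarith
  set t : ℝ := l - γ with htdef
  have ht : (0:ℝ) ≤ t := by simp [htdef]; linarith
  have hlg : (0:ℝ) ≤ l + γ := by linarith
  have h2 : (0:ℝ) ≤ l^2 - γ^2 := by nlinarith
  set X : ℝ := t + 3/(4*γ)*t^2 + 3/(32*γ^2)*t^3 with hXdef
  have hX : 0 ≤ X := by positivity
  have key : t*(l+γ)*Real.sqrt (l+γ) ≤ Real.sqrt (8*γ^3) * X := by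
    have lhs_eq : Real.sqrt (t^2*(l+γ)^2*(l+γ)) = t*(l+γ)*Real.sqrt (l+γ) := by
      rw [Real.sqrt_mul (by positivity : (0:ℝ) ≤ t^2*(l+γ)^2) (l+γ),
        Real.sqrt_mul (sq_nonneg t) ((l+γ)^2), Real.sqrt_sq ht, Real.sqrt_sq hlg]
    have rhs_eq : Real.sqrt (8*γ^3 * X^2) = Real.sqrt (8*γ^3) * X := by
      rw [Real.sqrt_mul (by positivity : (0:ℝ) ≤ 8*γ^3) (X^2), Real.sqrt_sq hX]
    rw [← lhs_eq, ← rhs_eq]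
    apply Real.sqrt_le_sqrt
    have hXeq : X = (32*γ^2*t + 24*γ*t^2 + 3*t^3)/(32*γ^2) := by
      rw [hXdef, eq_div_iff (by positivity)]
      field_simp
      ring
    rw [hXeq]
    rw [div_pow, ← mul_div_assoc, le_div_iff₀ (by positivity)]
    have hlq : l + γ = t + 2*γ := by simp [htdef]; ring
    rw [hlq]
    nlinarith [mul_nonneg (pow_nonneg ht 5) hγ0.le, pow_nonneg ht 6,
      mul_nonneg (mul_nonneg (pow_nonneg ht 5) hγ0.le) hγ0.le]
  have hsqrt2 : Real.sqrt (l^2 - γ^2) = Real.sqrt t * Real.sqrt (l+γ) := by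
    rw [← Real.sqrt_mul ht]
    congr 1
    simp [htdef]; ring
  have e0 : Real.exp (-l) * (l^2-γ^2) ^ (((1:ℕ):ℝ)+1/2)
      = (Real.exp (-l) * Real.sqrt t) * (t*(l+γ)*Real.sqrt (l+γ)) := by
    rw [rpow_sqrt' _ h2, hsqrt2]
    have : l^2 - γ^2 = t*(l+γ) := by simp [htdef]; ring
    rw [this]
    ring
  have e1 : Real.sqrt (8*γ^3) * (Real.exp (-l) * (l-γ)^(((1:ℕ):ℝ)+1/2))
        + (3/(4*γ)) * Real.sqrt (8*γ^3) * (Real.exp (-l) * (l-γ)^(((2:ℕ):ℝ)+1/2))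
        + (3/(32*γ^2)) * Real.sqrt (8*γ^3) * (Real.exp (-l) * (l-γ)^(((3:ℕ):ℝ)+1/2))
      = (Real.exp (-l) * Real.sqrt t) * (Real.sqrt (8*γ^3) * X) := by
    rw [rpow_sqrt' _ ht, rpow_sqrt' _ ht, rpow_sqrt' _ ht, hXdef]
    ring
  rw [e0, e1]
  exact mul_le_mul_of_nonneg_left key (by positivity)

/-- Bounds on the integral `A = ∫_γ^∞ e^{-l}(l²-γ²)^{3/2} dl`. -/
lemma Abounds (γ : ℝ) (hγ : 1 ≤ γ) :
    Real.sqrt (8*γ^3) * (Real.exp (-γ) * (3/4 * Real.sqrt π))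
      ≤ (∫ l in Set.Ioi γ, Real.exp (-l) * (l^2-γ^2) ^ (((1:ℕ):ℝ)+1/2)) ∧
    (∫ l in Set.Ioi γ, Real.exp (-l) * (l^2-γ^2) ^ (((1:ℕ):ℝ)+1/2))
      ≤ Real.sqrt (8*γ^3) * Real.exp (-γ) * Real.sqrt π
          * (3/4 + 45/(32*γ) + 315/(512*γ^2)) := by
  have hγ0 : (0:ℝ) < γ := by linarith
  have h1 : IntegrableOn (fun l => Real.exp (-l) * (l-γ) ^ (((1:ℕ):ℝ)+1/2)) (Set.Ioi γ) :=
    intShift γ _ (by norm_num)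
  have h2 : IntegrableOn (fun l => Real.exp (-l) * (l-γ) ^ (((2:ℕ):ℝ)+1/2)) (Set.Ioi γ) :=
    intShift γ _ (by norm_num)
  have h3 : IntegrableOn (fun l => Real.exp (-l) * (l-γ) ^ (((3:ℕ):ℝ)+1/2)) (Set.Ioi γ) :=
    intShift γ _ (by norm_num)
  have hbnd_int : IntegrableOn (fun l =>
      Real.sqrt (8*γ^3) * (Real.exp (-l) * (l-γ)^(((1:ℕ):ℝ)+1/2))
        + (3/(4*γ)) * Real.sqrt (8*γ^3) * (Real.exp (-l) * (l-γ)^(((2:ℕ):ℝ)+1/2))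
        + (3/(32*γ^2)) * Real.sqrt (8*γ^3) * (Real.exp (-l) * (l-γ)^(((3:ℕ):ℝ)+1/2)))
      (Set.Ioi γ) :=
    ((h1.const_mul _).add ((h2.const_mul _))).add (h3.const_mul _)
  have hf_meas : Measurable (fun l : ℝ => Real.exp (-l) * (l^2-γ^2) ^ (((1:ℕ):ℝ)+1/2)) := by
    fun_prop
  have hf_int : IntegrableOn
      (fun l => Real.exp (-l) * (l^2-γ^2) ^ (((1:ℕ):ℝ)+1/2)) (Set.Ioi γ) := by
    apply Integrable.mono' hbnd_int
      (hf_meas.aestronglyMeasurable)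
    filter_upwards [ae_restrict_mem measurableSet_Ioi] with l hl
    have hl' : γ < l := hl
    have hb : (0:ℝ) ≤ l^2 - γ^2 := by nlinarith
    rw [Real.norm_eq_abs, abs_of_nonneg
      (mul_nonneg (Real.exp_nonneg _) (Real.rpow_nonneg hb _))]
    exact ptUpper γ l hγ hl'
  constructor
  · have mono := setIntegral_mono_on ((h1.const_mul (Real.sqrt (8*γ^3)))) hf_int
      measurableSet_Ioi (fun l hl => ptLower γ l hγ hl)
    calc Real.sqrt (8*γ^3) * (Real.exp (-γ) * (3/4 * Real.sqrt π))
        = ∫ l in Set.Ioi γ,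
            Real.sqrt (8*γ^3) * (Real.exp (-l) * (l-γ)^(((1:ℕ):ℝ)+1/2)) := by
          rw [integral_const_mul, intShiftVal γ _ (by norm_num),
            show ((1:ℕ):ℝ)+1/2+1 = 5/2 by norm_num, gamma52]
      _ ≤ _ := mono
  · have mono := setIntegral_mono_on hf_int hbnd_int
      measurableSet_Ioi (fun l hl => ptUpper γ l hγ hl)
    refine le_trans mono (le_of_eq ?_)
    have h12 : IntegrableOn (fun l =>
        Real.sqrt (8*γ^3) * (Real.exp (-l) * (l-γ)^(((1:ℕ):ℝ)+1/2))
          + (3/(4*γ)) * Real.sqrt (8*γ^3) * (Real.exp (-l) * (l-γ)^(((2:ℕ):ℝ)+1/2)))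
        (Set.Ioi γ) := (h1.const_mul _).add (h2.const_mul _)
    rw [integral_add h12 (h3.const_mul _),
      integral_add (h1.const_mul _) (h2.const_mul _),
      integral_const_mul, integral_const_mul, integral_const_mul,
      intShiftVal γ _ (by norm_num : (0:ℝ) < ((1:ℕ):ℝ)+1/2),
      intShiftVal γ _ (by norm_num : (0:ℝ) < ((2:ℕ):ℝ)+1/2),
      intShiftVal γ _ (by norm_num : (0:ℝ) < ((3:ℕ):ℝ)+1/2),
      show ((1:ℕ):ℝ)+1/2+1 = 5/2 by norm_num,
      show ((2:ℕ):ℝ)+1/2+1 = 7/2 by norm_num,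
      show ((3:ℕ):ℝ)+1/2+1 = 9/2 by norm_num, gamma52, gamma72, gamma92]
    field_simp
    ring

lemma Kb2_eq (γ : ℝ) (hγ0 : 0 < γ) : Kb 2 γ = (1/3) * (γ^2)⁻¹ *
    ∫ l in Set.Ioi γ, Real.exp (-l) * (l^2-γ^2) ^ (((1:ℕ):ℝ)+1/2) := by
  unfold Kb
  have e1 : ((2:ℕ):ℝ) - 1/2 = ((1:ℕ):ℝ)+1/2 := by norm_num
  have e2 : γ ^ (-((2:ℕ):ℝ)) = (γ^2)⁻¹ := by
    rw [Real.rpow_neg hγ0.le, Real.rpow_natCast]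
  rw [e1, e2]
  norm_num [Nat.factorial]

set_option maxHeartbeats 1600000 in
/-- There is `C > 0` such that for every `c ≥ 1` and all `p ∈ ℝ³`:
`(1 − 4/c²)·(2π)^{−3/2}·exp(−|p|²/2) ≤ μ^c(p) ≤ C·exp(−(3|p|/8)·min{|p|, 4c/3})`. -/
theorem stmt7 :
    ∃ C : ℝ, 0 < C ∧ ∀ (c : ℝ), 1 ≤ c → ∀ p : E3,
      (1 - 4 / c ^ 2) * (2 * Real.pi) ^ (-(3 : ℝ) / 2) * Real.exp (-‖p‖ ^ 2 / 2) ≤ muC c p ∧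
      muC c p ≤ C * Real.exp (-(3 * ‖p‖ / 8) * min ‖p‖ (4 * c / 3)) := by
  refine ⟨1, one_pos, ?_⟩
  intro c hc p
  have hc0 : (0:ℝ) < c := by linarith
  set γ : ℝ := c^2 with hγdef
  have hγ : 1 ≤ γ := by nlinarith [hγdef]
  have hγ0 : (0:ℝ) < γ := by linarith
  set r : ℝ := ‖p‖ with hrdef
  have hr0 : (0:ℝ) ≤ r := norm_nonneg p
  have hpZ : pZ c p = Real.sqrt (c^2 + r^2) := rfl
  clear_value γ r
  -- energy inequalities
  have hE1 : c * pZ c p ≤ γ + r^2/2 := by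
    have hs : Real.sqrt (c^2 + r^2) ≤ c + r^2/(2*c) := by
      rw [show c + r^2/(2*c) = Real.sqrt ((c + r^2/(2*c))^2) from
        (Real.sqrt_sq (by positivity)).symm]
      apply Real.sqrt_le_sqrt
      have hx : 2*c*(r^2/(2*c)) = r^2 := by field_simp
      nlinarith [sq_nonneg (r^2/(2*c))]
    rw [hpZ]
    have := mul_le_mul_of_nonneg_left hs hc0.le
    have hx : c * (c + r^2/(2*c)) = γ + r^2/2 := by
      rw [hγdef]; field_simp
    linarith
  have hE2 : γ + (3*r/8) * min r (4*c/3) ≤ c * pZ c p := by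
    rcases le_total r (4*c/3) with h | h
    · rw [min_eq_left h, hpZ]
      have hs : c + 3*r^2/(8*c) ≤ Real.sqrt (c^2 + r^2) := by
        rw [show c + 3*r^2/(8*c) = Real.sqrt ((c + 3*r^2/(8*c))^2) from
          (Real.sqrt_sq (by positivity)).symm]
        apply Real.sqrt_le_sqrt
        have hx : 2*c*(3*r^2/(8*c)) = 3*r^2/4 := by field_simp; ring
        have hx2 : (3*r^2/(8*c))^2 = 9*r^4/(64*c^2) := by field_simp; ring
        have hx3 : 9*r^4/(64*c^2) ≤ r^2/4 := by
          rw [div_le_div_iff₀ (by positivity) (by norm_num)]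
          have h1 : r*r ≤ (4*c/3)*(4*c/3) :=
            mul_le_mul h h hr0 (by positivity)
          nlinarith [h1, mul_nonneg hr0 hr0]
        nlinarith
      have := mul_le_mul_of_nonneg_left hs hc0.le
      have hx : c * (c + 3*r^2/(8*c)) = γ + 3*r/8*r := by
        rw [hγdef]; field_simp
      linarith
    · rw [min_eq_right h, hpZ]
      have hs : c + r/2 ≤ Real.sqrt (c^2 + r^2) := by
        rw [show c + r/2 = Real.sqrt ((c + r/2)^2) from
          (Real.sqrt_sq (by positivity)).symm]
        apply Real.sqrt_le_sqrt
        nlinarith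
      have := mul_le_mul_of_nonneg_left hs hc0.le
      have hx : c * (c + r/2) = γ + 3*r/8 * (4*c/3) := by
        rw [hγdef]; ring
      linarith
  -- abbreviations
  set sB : ℝ := Real.sqrt (8*γ^3) with hsBdef
  have hsB2 : sB^2 = 8*γ^3 := Real.sq_sqrt (by positivity)
  have hsB0 : 0 ≤ sB := Real.sqrt_nonneg _
  set sp : ℝ := Real.sqrt π with hspdef
  have hsp2 : sp^2 = π := Real.sq_sqrt Real.pi_pos.le
  have hsp0 : 0 ≤ sp := Real.sqrt_nonneg _
  set P : ℝ := (2*π) ^ ((3:ℝ)/2) with hPdef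
  have hP0 : 0 < P := Real.rpow_pos_of_pos (by positivity) _
  have hP2 : P^2 = 8*π^3 := by
    rw [hPdef, ← Real.rpow_natCast ((2*π) ^ ((3:ℝ)/2)) 2, ← Real.rpow_mul (by positivity),
      show (3:ℝ)/2 * ((2:ℕ):ℝ) = ((3:ℕ):ℝ) by norm_num, Real.rpow_natCast]
    ring
  have h27 : (3:ℝ)^3 ≤ π^3 := pow_le_pow_left₀ (by norm_num) Real.pi_gt_three.le 3
  have h216 : (216:ℝ) ≤ 8*π^3 := by nlinarith [h27]
  have hP1 : 1 ≤ P := by nlinarith [hP2, hP0, h216]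
  clear_value sB sp P
  -- key identity
  have hkey : π * c * sB * sp / γ^2 = P := by
    apply sqEq' (by positivity) hP0.le
    have hc2 : c^2 = γ := hγdef.symm
    rw [hP2, div_pow, mul_pow, mul_pow, mul_pow, hsB2, hsp2, hc2]
    field_simp
  -- bounds on D = 4 π c Kb 2 γ
  have hA := Abounds γ hγ
  have hKb : Kb 2 γ = (1/3) * (γ^2)⁻¹ *
      ∫ l in Set.Ioi γ, Real.exp (-l) * (l^2-γ^2) ^ (((1:ℕ):ℝ)+1/2) := Kb2_eq γ hγ0
  set D : ℝ := 4 * π * c * Kb 2 γ with hDdef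
  clear_value D
  have hDlow : P * Real.exp (-γ) ≤ D := by
    rw [hDdef, hKb, ← hkey]
    have := hA.1
    rw [← hsBdef, ← hspdef] at this
    calc π * c * sB * sp / γ^2 * Real.exp (-γ)
        = (4*π*c) * ((1/3) * (γ^2)⁻¹ * (sB * (Real.exp (-γ) * (3/4 * sp)))) := by
          field_simp
      _ ≤ _ := by
          apply mul_le_mul_of_nonneg_left _ (by positivity)
          apply mul_le_mul_of_nonneg_left this (by positivity)
  have hD0 : 0 < D := lt_of_lt_of_le (by positivity) hDlow
  have hDup : (1 - 4/γ) * D ≤ P * Real.exp (-γ) := by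
    rcases le_or_gt (1 - 4/γ) 0 with h | h
    · calc (1 - 4/γ) * D ≤ 0 := mul_nonpos_of_nonpos_of_nonneg h hD0.le
        _ ≤ P * Real.exp (-γ) := by positivity
    · have hDub : D ≤ P * Real.exp (-γ) * (1 + 15/(8*γ) + 105/(128*γ^2)) := by
        rw [hDdef, hKb, ← hkey]
        have := hA.2
        rw [← hsBdef, ← hspdef] at this
        calc (4*π*c) * ((1/3) * (γ^2)⁻¹ *
              ∫ l in Set.Ioi γ, Real.exp (-l) * (l^2-γ^2) ^ (((1:ℕ):ℝ)+1/2))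
            ≤ (4*π*c) * ((1/3) * (γ^2)⁻¹ *
              (sB * Real.exp (-γ) * sp * (3/4 + 45/(32*γ) + 315/(512*γ^2)))) := by
              apply mul_le_mul_of_nonneg_left _ (by positivity)
              apply mul_le_mul_of_nonneg_left this (by positivity)
          _ = π * c * sB * sp / γ^2 * Real.exp (-γ) * (1 + 15/(8*γ) + 105/(128*γ^2)) := by
              field_simp; ring
      have hfac : (1 - 4/γ) * (1 + 15/(8*γ) + 105/(128*γ^2)) ≤ 1 := by
        have expand : (1 - 4/γ) * (1 + 15/(8*γ) + 105/(128*γ^2))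
            = 1 - (17/(8*γ) + 855/(128*γ^2) + 105/(32*γ^3)) := by
          field_simp
          ring
        rw [expand]
        have hpos : (0:ℝ) ≤ 17/(8*γ) + 855/(128*γ^2) + 105/(32*γ^3) := by positivity
        linarith
      calc (1 - 4/γ) * D
          ≤ (1 - 4/γ) * (P * Real.exp (-γ) * (1 + 15/(8*γ) + 105/(128*γ^2))) :=
            mul_le_mul_of_nonneg_left hDub h.le
        _ = (P * Real.exp (-γ)) * ((1 - 4/γ) * (1 + 15/(8*γ) + 105/(128*γ^2))) := by ring
        _ ≤ (P * Real.exp (-γ)) * 1 := mul_le_mul_of_nonneg_left hfac (by positivity)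
        _ = P * Real.exp (-γ) := mul_one _
  -- conclude
  have hmu : muC c p = Real.exp (-(c * pZ c p)) / D := by
    rw [hDdef, hγdef]; rfl
  constructor
  · -- lower bound
    rw [hmu,
      show (-(3:ℝ)/2) = -((3:ℝ)/2) by norm_num,
      Real.rpow_neg (by positivity : (0:ℝ) ≤ 2*π), ← hPdef,
      le_div_iff₀ hD0]
    have hexp : Real.exp (-γ) * Real.exp (-r^2/2) ≤ Real.exp (-(c * pZ c p)) := by
      rw [← Real.exp_add]
      apply Real.exp_le_exp.2
      have : -r^2/2 = -(r^2/2) := by ring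
      rw [this]
      linarith
    have hPinv : P * P⁻¹ = 1 := mul_inv_cancel₀ (ne_of_gt hP0)
    calc (1 - 4/γ) * P⁻¹ * Real.exp (-r^2/2) * D
        = ((1 - 4/γ) * D) * P⁻¹ * Real.exp (-r^2/2) := by ring
      _ ≤ (P * Real.exp (-γ)) * P⁻¹ * Real.exp (-r^2/2) := by
          apply mul_le_mul_of_nonneg_right _ (Real.exp_nonneg _)
          exact mul_le_mul_of_nonneg_right hDup (by positivity)
      _ = Real.exp (-γ) * Real.exp (-r^2/2) := by
          rw [show P * Real.exp (-γ) * P⁻¹ = (P * P⁻¹) * Real.exp (-γ) from by ring, hPinv,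
            one_mul]
      _ ≤ Real.exp (-(c * pZ c p)) := hexp
  · -- upper bound
    rw [hmu, one_mul, div_le_iff₀ hD0]
    have hexp : Real.exp (-(c * pZ c p))
        ≤ Real.exp (-(3*r/8) * min r (4*c/3)) * Real.exp (-γ) := by
      rw [← Real.exp_add]
      apply Real.exp_le_exp.2
      have : -(3*r/8) * min r (4*c/3) = -((3*r/8) * min r (4*c/3)) := by ring
      rw [this]
      linarith
    have hDexp : Real.exp (-γ) ≤ D := by
      calc Real.exp (-γ) = 1 * Real.exp (-γ) := (one_mul _).symm
        _ ≤ P * Real.exp (-γ) := mul_le_mul_of_nonneg_right hP1 (Real.exp_nonneg _)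
        _ ≤ D := hDlow
    calc Real.exp (-(c * pZ c p))
        ≤ Real.exp (-(3*r/8) * min r (4*c/3)) * Real.exp (-γ) := hexp
      _ ≤ Real.exp (-(3*r/8) * min r (4*c/3)) * D :=
          mul_le_mul_of_nonneg_left hDexp (Real.exp_nonneg _)

end
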